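/- arXiv:1001.1468 — 2 statements merged into one kernel-verified Lean document; each statement's English description precedes it below -/
import Mathlib

section
/- Let b_1,…,b_N, b̂_1,…,b̂_N > 0 with Σ b_i = Σ b̂_i = 1, and p_{00}, p_{01}, p_{10}, p_{11} > 0 with p_{00} p_{11} = p_{01} p_{10}. Suppose log(p_{00}/p_{01}) = Σ_i b_i log((b_i p_{00} + b̂_i p_{10})/(b_i p_{11} + b̂_i p_{01})) and log(p_{00}/p_{01}) = Σ_i b̂_i log((b_i p_{00} + b̂_i p_{10})/(b_i p_{11} + b̂_i p_{01})). Then either b_i = b̂_i for all i, or p_{01} = p_{11}. -/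
open scoped BigOperators

/-- Equality case of the log-sum inequality: if `∑ uᵢ log(uᵢ/vᵢ) = U log(U/V)`
with `∑ u = U`, `∑ v = V`, then `vⱼ U = uⱼ V` for all `j`. -/
lemma logsum_eq_aux {N : ℕ} (u v : Fin N → ℝ) (hu : ∀ i, 0 < u i) (hv : ∀ i, 0 < v i)
    (U V : ℝ) (hU : ∑ i, u i = U) (hV : ∑ i, v i = V) (hU0 : 0 < U) (hV0 : 0 < V)
    (heq : ∑ i, u i * (Real.log (u i) - Real.log (v i)) = U * (Real.log U - Real.log V)) :
    ∀ j, v j * U = u j * V := by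
  have hw : ∀ i ∈ Finset.univ, (0:ℝ) < u i / U := fun i _ => div_pos (hu i) hU0
  have hw1 : ∑ i, u i / U = 1 := by rw [← Finset.sum_div, hU, div_self hU0.ne']
  have hmem : ∀ i ∈ Finset.univ, v i / u i ∈ Set.Ioi (0:ℝ) := fun i _ => div_pos (hv i) (hu i)
  have hsp : ∑ i, (u i / U) • (v i / u i) = V / U := by
    simp only [smul_eq_mul]
    have e : ∀ i ∈ Finset.univ, (u i / U) * (v i / u i) = v i / U := fun i _ => by
      rw [div_mul_div_comm, mul_comm U (u i), mul_div_mul_left _ _ (hu i).ne']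
    rw [Finset.sum_congr rfl e, ← Finset.sum_div, hV]
  have key : Real.log (∑ i, (u i / U) • (v i / u i)) =
      ∑ i, (u i / U) • Real.log (v i / u i) := by
    rw [hsp, Real.log_div hV0.ne' hU0.ne']
    have e : ∀ i ∈ Finset.univ, (u i / U) • Real.log (v i / u i)
        = (u i * (Real.log (v i) - Real.log (u i))) / U := fun i _ => by
      rw [smul_eq_mul, Real.log_div (hv i).ne' (hu i).ne']
      field_simp
    rw [Finset.sum_congr rfl e, ← Finset.sum_div]
    have h2 : ∑ i, u i * (Real.log (v i) - Real.log (u i))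
        = -(∑ i, u i * (Real.log (u i) - Real.log (v i))) := by
      rw [← Finset.sum_neg_distrib]
      exact Finset.sum_congr rfl fun i _ => by ring
    rw [h2, heq]
    field_simp
    ring
  have hall := (strictConcaveOn_log_Ioi.map_sum_eq_iff hw hw1 hmem).mp key
  intro j
  have hj := hall j (Finset.mem_univ j)
  rw [hsp] at hj
  have := (div_eq_div_iff (hu j).ne' hU0.ne').mp hj
  linarith [this]

/-- Tightness of the log-sum (KL divergence) inequality: with positive
probability vectors `b, b̂`, positive `p`'s with `p₀₀p₁₁ = p₀₁p₁₀`, and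
`log(p₀₀/p₀₁)` equal to both the `b`- and the `b̂`-weighted log-ratio sums,
either `b = b̂` or `p₀₁ = p₁₁`. -/
theorem stmt13 {N : ℕ} (b bhat : Fin N → ℝ) (p00 p01 p10 p11 : ℝ)
    (hb : ∀ i, 0 < b i) (hbhat : ∀ i, 0 < bhat i)
    (hsb : ∑ i, b i = 1) (hsbhat : ∑ i, bhat i = 1)
    (h00 : 0 < p00) (h01 : 0 < p01) (h10 : 0 < p10) (h11 : 0 < p11)
    (hdet : p00 * p11 = p01 * p10)
    (h1 : Real.log (p00 / p01) =
      ∑ i, b i * Real.log ((b i * p00 + bhat i * p10) / (b i * p11 + bhat i * p01)))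
    (h2 : Real.log (p00 / p01) =
      ∑ i, bhat i * Real.log ((b i * p00 + bhat i * p10) / (b i * p11 + bhat i * p01))) :
    (∀ i, b i = bhat i) ∨ p01 = p11 := by
  by_cases hp : p01 = p11
  · exact Or.inr hp
  left
  have hui : ∀ i, 0 < b i * p00 + bhat i * p10 := fun i =>
    add_pos (mul_pos (hb i) h00) (mul_pos (hbhat i) h10)
  have hvi : ∀ i, 0 < b i * p11 + bhat i * p01 := fun i =>
    add_pos (mul_pos (hb i) h11) (mul_pos (hbhat i) h01)
  have hU : ∑ i, (b i * p00 + bhat i * p10) = p00 + p10 := by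
    rw [Finset.sum_add_distrib, ← Finset.sum_mul, ← Finset.sum_mul, hsb, hsbhat, one_mul, one_mul]
  have hV : ∑ i, (b i * p11 + bhat i * p01) = p11 + p01 := by
    rw [Finset.sum_add_distrib, ← Finset.sum_mul, ← Finset.sum_mul, hsb, hsbhat, one_mul, one_mul]
  have hU0 : (0:ℝ) < p00 + p10 := by linarith
  have hV0 : (0:ℝ) < p11 + p01 := by linarith
  -- log(p00/p01) = log U - log V since p00 * V = p01 * U
  have hlog : Real.log (p00 / p01) = Real.log (p00 + p10) - Real.log (p11 + p01) := by
    rw [Real.log_div h00.ne' h01.ne']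
    have hmul : p00 * (p11 + p01) = p01 * (p00 + p10) := by linear_combination hdet
    have := congrArg Real.log hmul
    rw [Real.log_mul h00.ne' hV0.ne', Real.log_mul h01.ne' hU0.ne'] at this
    linarith
  have e : ∀ i : Fin N, Real.log ((b i * p00 + bhat i * p10) / (b i * p11 + bhat i * p01))
      = Real.log (b i * p00 + bhat i * p10) - Real.log (b i * p11 + bhat i * p01) :=
    fun i => Real.log_div (hui i).ne' (hvi i).ne'
  simp only [e] at h1 h2
  have hcomb : ∑ i, (b i * p00 + bhat i * p10) *
      (Real.log (b i * p00 + bhat i * p10) - Real.log (b i * p11 + bhat i * p01))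
      = (p00 + p10) * (Real.log (p00 + p10) - Real.log (p11 + p01)) := by
    calc ∑ i, (b i * p00 + bhat i * p10) *
          (Real.log (b i * p00 + bhat i * p10) - Real.log (b i * p11 + bhat i * p01))
        = p00 * (∑ i, b i * (Real.log (b i * p00 + bhat i * p10)
            - Real.log (b i * p11 + bhat i * p01)))
          + p10 * (∑ i, bhat i * (Real.log (b i * p00 + bhat i * p10)
            - Real.log (b i * p11 + bhat i * p01))) := by
          rw [Finset.mul_sum, Finset.mul_sum, ← Finset.sum_add_distrib]
          exact Finset.sum_congr rfl fun i _ => by ring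
      _ = p00 * Real.log (p00 / p01) + p10 * Real.log (p00 / p01) := by rw [← h1, ← h2]
      _ = (p00 + p10) * (Real.log (p00 + p10) - Real.log (p11 + p01)) := by rw [hlog]; ring
  have key := logsum_eq_aux _ _ hui hvi _ _ hU hV hU0 hV0 hcomb
  intro i
  have hi := key i
  have hfac : (b i - bhat i) * (p10 * p11 - p00 * p01) = 0 := by linear_combination hi
  rcases mul_eq_zero.mp hfac with h | h
  · linarith
  · exfalso
    have hsq : p00 * p11 ^ 2 - p00 * p01 ^ 2 = 0 := by linear_combination p11 * hdet + p01 * h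
    have h3 : (p11 - p01) * (p11 + p01) = 0 := by
      have := mul_left_cancel₀ h00.ne' (show p00 * ((p11 - p01) * (p11 + p01)) = p00 * 0 by
        linear_combination hsq)
      simpa using this
    rcases mul_eq_zero.mp h3 with h4 | h4
    · exact hp (by linarith)
    · linarith
end

section
/- Let (U,V,W,X,Y,Z) be finitely-valued random variables with (U,V,W) → X → (Y,Z) a Markov chain and |range(X)| = 2. Assume the inequality I(U';Y) + I(V';Z) - I(U';V') ≤ max{I(X;Y), I(X;Z)} holds conditionally on every value w of W (applied to the conditional distributions given W = w). If for every w, I(X;Y | W=w) ≥ I(X;Z | W=w), then min{I(W;Y), I(W;Z)} + I(U;Y|W) + I(V;Z|W) - I(U;V|W) ≤ I(X;Y). -/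
open scoped Classical BigOperators

noncomputable section

/-- `p` is a probability mass function on the finite sample space `Ω`. -/
def IsPMF {Ω : Type*} [Fintype Ω] (p : Ω → ℝ) : Prop :=
  (∀ ω, 0 ≤ p ω) ∧ ∑ ω, p ω = 1

/-- Probability of the event `E` under the mass function `p`. -/
def prob {Ω : Type*} [Fintype Ω] (p : Ω → ℝ) (E : Ω → Prop) : ℝ :=
  ∑ ω, if E ω then p ω else 0

/-- Shannon entropy of the random variable `f` under `p` (natural logarithm,
with the convention `0 * log 0 = 0`, automatic since `Real.log 0 = 0`). -/
def entropy {Ω α : Type*} [Fintype Ω] [Fintype α] (p : Ω → ℝ) (f : Ω → α) : ℝ :=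
  -∑ a, prob p (fun ω => f ω = a) * Real.log (prob p (fun ω => f ω = a))

/-- Shannon mutual information `I(f;g)` under `p`. -/
def mutInfo {Ω α β : Type*} [Fintype Ω] [Fintype α] [Fintype β]
    (p : Ω → ℝ) (f : Ω → α) (g : Ω → β) : ℝ :=
  entropy p f + entropy p g - entropy p (fun ω => (f ω, g ω))

/-- Conditional Shannon entropy `H(f | g)`. -/
def condEntropy {Ω α β : Type*} [Fintype Ω] [Fintype α] [Fintype β]
    (p : Ω → ℝ) (f : Ω → α) (g : Ω → β) : ℝ :=
  entropy p (fun ω => (f ω, g ω)) - entropy p g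

/-- The Markov chain `A → X → C`: `A` and `C` are conditionally independent given `X`. -/
def Markov {Ω α β γ : Type*} [Fintype Ω] [Fintype α] [Fintype β] [Fintype γ]
    (p : Ω → ℝ) (A : Ω → α) (X : Ω → β) (C : Ω → γ) : Prop :=
  ∀ a x c,
    prob p (fun ω => A ω = a ∧ X ω = x ∧ C ω = c) * prob p (fun ω => X ω = x) =
      prob p (fun ω => A ω = a ∧ X ω = x) * prob p (fun ω => X ω = x ∧ C ω = c)

/-- The conditional probability mass function given the event `E`. -/
def condPMF {Ω : Type*} [Fintype Ω] (p : Ω → ℝ) (E : Ω → Prop) : Ω → ℝ :=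
  fun ω => if E ω then p ω / prob p E else 0

/-- Conditional mutual information `I(f;g | W) = ∑_w P(W=w) I(f;g | W=w)`. -/
def condMutInfo {Ω α β γ : Type*} [Fintype Ω] [Fintype α] [Fintype β] [Fintype γ]
    (p : Ω → ℝ) (f : Ω → α) (g : Ω → β) (W : Ω → γ) : ℝ :=
  ∑ w, prob p (fun ω => W ω = w) * mutInfo (condPMF p (fun ω => W ω = w)) f g

/-!
Weighting the hypothesis at each `w` by `P(W = w)` and summing gives
`I(U;Y|W) + I(V;Z|W) - I(U;V|W) ≤ I(X;Y|W)`. The Markov chain marginalizes to `W → X → Y`,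
so `I(W;Y|X) = 0`, and expanding `I((W,X);Y)` by the chain rule in both orders yields
`I(W;Y) + I(X;Y|W) = I(X;Y)`. It remains to bound the minimum by `I(W;Y)`.
-/

section Entropy

variable {Ω α β γ : Type*} [Fintype Ω] [Fintype α] [Fintype β] [Fintype γ] (p : Ω → ℝ)

lemma prob_congr {E F : Ω → Prop} (h : ∀ ω, E ω ↔ F ω) : prob p E = prob p F :=
  Finset.sum_congr rfl fun ω _ => by rw [h ω]

lemma prob_nonneg (hp : ∀ ω, 0 ≤ p ω) (E : Ω → Prop) : 0 ≤ prob p E :=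
  Finset.sum_nonneg fun ω _ => by split <;> simp [hp ω]

lemma prob_mono (hp : ∀ ω, 0 ≤ p ω) {E F : Ω → Prop} (h : ∀ ω, E ω → F ω) :
    prob p E ≤ prob p F :=
  Finset.sum_le_sum fun ω _ => by
    by_cases hE : E ω
    · simp [hE, h ω hE]
    · simp only [hE, if_false]; split <;> simp [hp ω]

lemma prob_and_eq_zero (hp : ∀ ω, 0 ≤ p ω) {E : Ω → Prop} (h : prob p E = 0) (F : Ω → Prop) :
    prob p (fun ω => F ω ∧ E ω) = 0 :=
  le_antisymm (h ▸ prob_mono p hp fun _ hω => hω.2) (prob_nonneg p hp _)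

lemma sum_prob_eq_and (f : Ω → α) (E : Ω → Prop) :
    ∑ a, prob p (fun ω => f ω = a ∧ E ω) = prob p E := by
  unfold prob
  rw [Finset.sum_comm]
  refine Finset.sum_congr rfl fun ω _ => ?_
  by_cases hE : E ω <;> simp [hE]

lemma sum_prob_eq (f : Ω → α) : ∑ a, prob p (fun ω => f ω = a) = ∑ ω, p ω := by
  simpa [prob] using sum_prob_eq_and p f (fun _ => True)

lemma prob_and_comp_eq_sum (f : Ω → α) (P : α → Prop) (E : Ω → Prop) :
    prob p (fun ω => P (f ω) ∧ E ω) = ∑ a with P a, prob p (fun ω => f ω = a ∧ E ω) := by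
  rw [Finset.sum_filter, ← sum_prob_eq_and p f]
  refine Finset.sum_congr rfl fun a _ => ?_
  by_cases ha : P a
  · rw [if_pos ha]
    exact prob_congr p fun ω =>
      ⟨fun ⟨hω, _, hE⟩ => ⟨hω, hE⟩, fun ⟨hω, hE⟩ => ⟨hω, hω ▸ ha, hE⟩⟩
  · rw [if_neg ha]
    exact Finset.sum_eq_zero fun ω _ => if_neg fun ⟨rfl, h, _⟩ => ha h

lemma prob_condPMF (E F : Ω → Prop) :
    prob (condPMF p E) F = prob p (fun ω => F ω ∧ E ω) / prob p E := by
  unfold prob condPMF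
  rw [Finset.sum_div]
  refine Finset.sum_congr rfl fun ω _ => ?_
  by_cases hF : F ω <;> by_cases hE : E ω <;> simp [hF, hE, prob]

lemma sum_condPMF {E : Ω → Prop} (hE : prob p E ≠ 0) : ∑ ω, condPMF p E ω = 1 := by
  have h := prob_condPMF p E (fun _ => True)
  simp only [true_and, div_self hE] at h
  simpa [prob] using h

lemma sum_prob_mul_le_sum_prob_mul (hp : ∀ ω, 0 ≤ p ω) (W : Ω → γ) {f g : γ → ℝ}
    (h : ∀ w, prob p (fun ω => W ω = w) ≠ 0 → f w ≤ g w) :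
    ∑ w, prob p (fun ω => W ω = w) * f w ≤ ∑ w, prob p (fun ω => W ω = w) * g w :=
  Finset.sum_le_sum fun w _ => by
    by_cases h0 : prob p (fun ω => W ω = w) = 0
    · simp [h0]
    · exact mul_le_mul_of_nonneg_left (h w h0) (prob_nonneg p hp _)

lemma entropy_comp_injective (f : Ω → α) {e : α → β} (he : Function.Injective e) :
    entropy p (fun ω => e (f ω)) = entropy p f := by
  unfold entropy
  congr 1
  set φ : β → ℝ := fun b => prob p (fun ω => e (f ω) = b) *
      Real.log (prob p (fun ω => e (f ω) = b))
  calc ∑ b, φ b = ∑ b ∈ Finset.univ.image e, φ b := by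
        refine (Finset.sum_subset (Finset.subset_univ _) fun b _ hb => ?_).symm
        have h0 : prob p (fun ω => e (f ω) = b) = 0 :=
          Finset.sum_eq_zero fun ω _ =>
            if_neg fun hω => hb (Finset.mem_image.2 ⟨f ω, Finset.mem_univ _, hω⟩)
        simp [φ, h0]
    _ = ∑ a, φ (e a) := Finset.sum_image fun a _ b _ h => he h
    _ = _ := by
        refine Finset.sum_congr rfl fun a _ => ?_
        simp only [φ, prob_congr p fun ω => he.eq_iff]

lemma entropy_swap (f : Ω → α) (g : Ω → β) :
    entropy p (fun ω => (f ω, g ω)) = entropy p (fun ω => (g ω, f ω)) :=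
  entropy_comp_injective p (fun ω => (g ω, f ω)) Prod.swap_injective

lemma mutInfo_comp_injective_left (f : Ω → α) (g : Ω → γ) {e : α → β}
    (he : Function.Injective e) : mutInfo p (fun ω => e (f ω)) g = mutInfo p f g := by
  have hpair := entropy_comp_injective p (fun ω => (f ω, g ω))
    (e := Prod.map e id) (he.prodMap Function.injective_id)
  simp only [mutInfo, entropy_comp_injective p f he, ← hpair, Prod.map, id]

lemma entropy_pair (f : Ω → α) (g : Ω → β) :
    entropy p (fun ω => (f ω, g ω)) = -∑ a, ∑ b, prob p (fun ω => f ω = a ∧ g ω = b) *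
      Real.log (prob p (fun ω => f ω = a ∧ g ω = b)) := by
  rw [entropy, Fintype.sum_prod_type]
  simp only [Prod.ext_iff]

lemma mul_log_mul (x y : ℝ) :
    x * y * Real.log (x * y) = x * Real.log x * y + x * (y * Real.log y) := by
  rcases eq_or_ne x 0 with rfl | hx
  · simp
  rcases eq_or_ne y 0 with rfl | hy
  · simp
  rw [Real.log_mul hx hy]
  ring

lemma mutInfo_eq_zero_of_indep (f : Ω → α) (g : Ω → β) (hp : ∑ ω, p ω = 1)
    (hind : ∀ a b, prob p (fun ω => f ω = a ∧ g ω = b) =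
        prob p (fun ω => f ω = a) * prob p (fun ω => g ω = b)) :
    mutInfo p f g = 0 := by
  have hpair : entropy p (fun ω => (f ω, g ω)) = entropy p f + entropy p g := by
    rw [entropy_pair]
    simp only [hind, mul_log_mul, Finset.sum_add_distrib, ← Finset.sum_mul,
      ← Finset.mul_sum, sum_prob_eq, hp, entropy]
    ring
  rw [mutInfo, hpair]
  ring

lemma prob_mul_entropy_condPMF (hp : ∀ ω, 0 ≤ p ω) (f : Ω → α) (E : Ω → Prop) :
    prob p E * entropy (condPMF p E) f
      = -∑ a, prob p (fun ω => f ω = a ∧ E ω) * Real.log (prob p (fun ω => f ω = a ∧ E ω))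
        + prob p E * Real.log (prob p E) := by
  set c := prob p E
  set r := fun a => prob p (fun ω => f ω = a ∧ E ω)
  have hcond : ∀ a, prob (condPMF p E) (fun ω => f ω = a) = r a / c :=
    fun a => prob_condPMF p _ _
  by_cases h0 : c = 0
  · have hr : ∀ a, prob p (fun ω => f ω = a ∧ E ω) = 0 :=
      fun a => prob_and_eq_zero p hp h0 _
    simp [entropy, h0, hcond, hr]
  have hterm : ∀ a, c * (r a / c * Real.log (r a / c))
      = r a * Real.log (r a) - r a * Real.log c := by
    intro a
    rcases eq_or_ne (r a) 0 with hra | hra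
    · simp [hra]
    · rw [Real.log_div hra h0]
      field_simp
  have hsum : ∑ a, r a = c := sum_prob_eq_and p f _
  calc c * entropy (condPMF p E) f
      = -∑ a, c * (r a / c * Real.log (r a / c)) := by
        rw [entropy, ← Finset.mul_sum]
        simp only [hcond]
        ring
    _ = -∑ a, r a * Real.log (r a) + (∑ a, r a) * Real.log c := by
        simp only [hterm, Finset.sum_sub_distrib, ← Finset.sum_mul]
        ring
    _ = _ := by rw [hsum]

lemma sum_prob_mul_entropy_condPMF (hp : ∀ ω, 0 ≤ p ω) (f : Ω → α) (W : Ω → γ) :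
    ∑ w, prob p (fun ω => W ω = w) * entropy (condPMF p (fun ω => W ω = w)) f
      = entropy p (fun ω => (f ω, W ω)) - entropy p W := by
  rw [entropy_pair, entropy, Finset.sum_comm]
  simp only [prob_mul_entropy_condPMF p hp, Finset.sum_add_distrib, Finset.sum_neg_distrib]
  ring

lemma condMutInfo_eq_entropy (hp : ∀ ω, 0 ≤ p ω) (f : Ω → α) (g : Ω → β) (W : Ω → γ) :
    condMutInfo p f g W = entropy p (fun ω => (f ω, W ω)) + entropy p (fun ω => (g ω, W ω))
      - entropy p (fun ω => ((f ω, g ω), W ω)) - entropy p W := by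
  simp only [condMutInfo, mutInfo, mul_add, mul_sub, Finset.sum_sub_distrib,
    Finset.sum_add_distrib, sum_prob_mul_entropy_condPMF p hp]
  ring

lemma mutInfo_add_condMutInfo (hp : ∀ ω, 0 ≤ p ω) (W : Ω → γ) (X : Ω → α) (Y : Ω → β) :
    mutInfo p W Y + condMutInfo p X Y W = mutInfo p (fun ω => (X ω, W ω)) Y := by
  have hXYW : entropy p (fun ω => ((X ω, Y ω), W ω)) = entropy p (fun ω => ((X ω, W ω), Y ω)) :=
    entropy_comp_injective p (fun ω => ((X ω, W ω), Y ω)) (e := fun t => ((t.1.1, t.2), t.1.2))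
      fun _ _ h => by simp_all [Prod.ext_iff]
  rw [condMutInfo_eq_entropy p hp, mutInfo, mutInfo, hXYW, entropy_swap p Y W]
  ring

end Entropy

section Markov

variable {Ω α β γ δ : Type*} [Fintype Ω] [Fintype α] [Fintype β] [Fintype γ] [Fintype δ]
  {p : Ω → ℝ} {A : Ω → α} {X : Ω → β} {C : Ω → γ}

lemma Markov.symm (h : Markov p A X C) : Markov p C X A := by
  intro c x a
  have hCXA : prob p (fun ω => C ω = c ∧ X ω = x ∧ A ω = a)
      = prob p (fun ω => A ω = a ∧ X ω = x ∧ C ω = c) := prob_congr p fun ω => by tauto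
  have hCX : prob p (fun ω => C ω = c ∧ X ω = x) = prob p (fun ω => X ω = x ∧ C ω = c) :=
    prob_congr p fun ω => and_comm
  have hXA : prob p (fun ω => X ω = x ∧ A ω = a) = prob p (fun ω => A ω = a ∧ X ω = x) :=
    prob_congr p fun ω => and_comm
  rw [hCXA, hCX, hXA, h a x c, mul_comm]

lemma Markov.comp_left (h : Markov p A X C) (f : α → δ) :
    Markov p (fun ω => f (A ω)) X C := by
  intro d x c
  rw [prob_and_comp_eq_sum p A (f · = d), prob_and_comp_eq_sum p A (f · = d), Finset.sum_mul,
    Finset.sum_mul]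
  exact Finset.sum_congr rfl fun a _ => h a x c

lemma Markov.comp_right (h : Markov p A X C) (g : γ → δ) :
    Markov p A X (fun ω => g (C ω)) :=
  (h.symm.comp_left g).symm

lemma Markov.condMutInfo_eq_zero (h : Markov p A X C) : condMutInfo p A C X = 0 := by
  refine Finset.sum_eq_zero fun x _ => ?_
  by_cases h0 : prob p (fun ω => X ω = x) = 0
  · simp [h0]
  refine mul_eq_zero_of_right _ (mutInfo_eq_zero_of_indep _ A C (sum_condPMF p h0) ?_)
  intro a c
  have hAXC : prob p (fun ω => (A ω = a ∧ C ω = c) ∧ X ω = x)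
      = prob p (fun ω => A ω = a ∧ X ω = x ∧ C ω = c) := prob_congr p fun ω => by tauto
  have hXC : prob p (fun ω => C ω = c ∧ X ω = x) = prob p (fun ω => X ω = x ∧ C ω = c) :=
    prob_congr p fun ω => and_comm
  rw [prob_condPMF, prob_condPMF, prob_condPMF, hAXC, hXC, div_mul_div_comm,
    div_eq_div_iff h0 (mul_ne_zero h0 h0)]
  linear_combination prob p (fun ω => X ω = x) * h a x c

end Markov

theorem stmt18_general {Ω αU αV αW χ αY αZ : Type*} [Fintype Ω] [Fintype αU] [Fintype αV]
    [Fintype αW] [Fintype χ] [Fintype αY] [Fintype αZ]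
    (p : Ω → ℝ) (hp : IsPMF p)
    (U : Ω → αU) (V : Ω → αV) (W : Ω → αW) (X : Ω → χ) (Y : Ω → αY) (Z : Ω → αZ)
    (hM : Markov p (fun ω => (U ω, V ω, W ω)) X (fun ω => (Y ω, Z ω)))
    (hcond : ∀ w, prob p (fun ω => W ω = w) ≠ 0 →
      mutInfo (condPMF p (fun ω => W ω = w)) U Y +
          mutInfo (condPMF p (fun ω => W ω = w)) V Z -
          mutInfo (condPMF p (fun ω => W ω = w)) U V ≤
        max (mutInfo (condPMF p (fun ω => W ω = w)) X Y)
          (mutInfo (condPMF p (fun ω => W ω = w)) X Z))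
    (hYZ : ∀ w, prob p (fun ω => W ω = w) ≠ 0 →
      mutInfo (condPMF p (fun ω => W ω = w)) X Z ≤
        mutInfo (condPMF p (fun ω => W ω = w)) X Y) :
    min (mutInfo p W Y) (mutInfo p W Z) + condMutInfo p U Y W +
        condMutInfo p V Z W - condMutInfo p U V W ≤ mutInfo p X Y := by
  have hp0 := hp.1
  have hsum : condMutInfo p U Y W + condMutInfo p V Z W - condMutInfo p U V W
      ≤ condMutInfo p X Y W := by
    simp only [condMutInfo, ← Finset.sum_add_distrib, ← Finset.sum_sub_distrib, ← mul_add,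
      ← mul_sub]
    exact sum_prob_mul_le_sum_prob_mul p hp0 W fun w hw =>
      (hcond w hw).trans (max_eq_left (hYZ w hw)).le
  have hWXY : Markov p W X Y := (hM.comp_left fun t => t.2.2).comp_right Prod.fst
  have hchain : mutInfo p W Y + condMutInfo p X Y W = mutInfo p X Y := by
    have hswap : mutInfo p (fun ω => (X ω, W ω)) Y = mutInfo p (fun ω => (W ω, X ω)) Y :=
      mutInfo_comp_injective_left p (fun ω => (W ω, X ω)) Y (e := Prod.swap) Prod.swap_injective
    rw [mutInfo_add_condMutInfo p hp0, hswap, ← mutInfo_add_condMutInfo p hp0,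
      hWXY.condMutInfo_eq_zero, add_zero]
  linarith [min_le_left (mutInfo p W Y) (mutInfo p W Z)]

/-- If `(U,V,W) → X → (Y,Z)` is Markov with binary `X`, the inequality
`I(U;Y) + I(V;Z) - I(U;V) ≤ max{I(X;Y), I(X;Z)}` holds under each conditional
distribution given `W = w`, and `I(X;Y|W=w) ≥ I(X;Z|W=w)` for every such `w`,
then `min{I(W;Y), I(W;Z)} + I(U;Y|W) + I(V;Z|W) - I(U;V|W) ≤ I(X;Y)`. -/
theorem stmt18 {Ω αU αV αW χ αY αZ : Type*} [Fintype Ω] [Fintype αU] [Fintype αV]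
    [Fintype αW] [Fintype χ] [Fintype αY] [Fintype αZ]
    (p : Ω → ℝ) (hp : IsPMF p)
    (U : Ω → αU) (V : Ω → αV) (W : Ω → αW) (X : Ω → χ) (Y : Ω → αY) (Z : Ω → αZ)
    (hcard : Fintype.card χ = 2)
    (hM : Markov p (fun ω => (U ω, V ω, W ω)) X (fun ω => (Y ω, Z ω)))
    (hcond : ∀ w, prob p (fun ω => W ω = w) ≠ 0 →
      mutInfo (condPMF p (fun ω => W ω = w)) U Y +
          mutInfo (condPMF p (fun ω => W ω = w)) V Z -
          mutInfo (condPMF p (fun ω => W ω = w)) U V ≤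
        max (mutInfo (condPMF p (fun ω => W ω = w)) X Y)
          (mutInfo (condPMF p (fun ω => W ω = w)) X Z))
    (hYZ : ∀ w, prob p (fun ω => W ω = w) ≠ 0 →
      mutInfo (condPMF p (fun ω => W ω = w)) X Z ≤
        mutInfo (condPMF p (fun ω => W ω = w)) X Y) :
    min (mutInfo p W Y) (mutInfo p W Z) + condMutInfo p U Y W +
        condMutInfo p V Z W - condMutInfo p U V W ≤ mutInfo p X Y :=
  stmt18_general p hp U V W X Y Z hM hcond hYZ
end
end
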